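/- For any connected graph G and any graph H with v(G) ≥ s(H), the Ramsey number satisfies R(G,H) ≥ (v(G)−1)(χ(H)−1) + s(H). -/

import Mathlib

open SimpleGraph Finset

/-- `G` embeds into `H` (a copy of `G` appears in `H`). -/
def graphEmbeds {V W : Type*} (G : SimpleGraph V) (H : SimpleGraph W) : Prop :=
  ∃ f : V → W, Function.Injective f ∧ ∀ u v, G.Adj u v → H.Adj (f u) (f v)

/-- `N` is large enough for the Ramsey property: every red/blue coloring of `K_N`
(the red graph `R`, blue graph `Rᶜ`) contains a red `G` or a blue `H`. -/
def isRamsey {V W : Type*} (G : SimpleGraph V) (H : SimpleGraph W) (N : ℕ) : Prop :=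
  ∀ R : SimpleGraph (Fin N), graphEmbeds G R ∨ graphEmbeds H Rᶜ

/-- The Ramsey number `R(G,H)`. -/
noncomputable def ramsey {V W : Type*} (G : SimpleGraph V) (H : SimpleGraph W) : ℕ :=
  sInf {N | isRamsey G H N}

/-- `t` disjoint copies of the complete graph `K_m`. -/
def kCliques (t m : ℕ) : SimpleGraph (Fin t × Fin m) where
  Adj x y := x.1 = y.1 ∧ x.2 ≠ y.2
  symm := ⟨fun x y h => ⟨h.1.symm, h.2.symm⟩⟩
  loopless := ⟨fun x h => h.2 rfl⟩

/-- The chromatic number as a natural number. -/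
noncomputable def chromNum {V : Type*} (G : SimpleGraph V) : ℕ := sInf {n | G.Colorable n}

/-- The chromatic surplus: the minimum size of a color class over all proper
colorings with `chromNum G` colors. -/
noncomputable def surplus {V : Type*} [Fintype V] (G : SimpleGraph V) : ℕ :=
  sInf {k | ∃ C : G.Coloring (Fin (chromNum G)), ∃ i : Fin (chromNum G),
    (Finset.univ.filter (fun v => C v = i)).card = k}

/-- `a` is a leaf of `G`: it has a unique neighbor. -/
def IsLeaf {V : Type*} (G : SimpleGraph V) (a : V) : Prop := ∃! w, G.Adj a w

/-- Stretching: delete a leaf `b` and attach a new vertex (reusing the label `b`)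
to the leaf `a`. -/
def isStretch {V : Type*} (T T' : SimpleGraph V) : Prop :=
  ∃ a b : V, a ≠ b ∧ IsLeaf T a ∧ IsLeaf T b ∧
    ∀ x y, T'.Adj x y ↔
      ((T.Adj x y ∧ x ≠ b ∧ y ≠ b) ∨ (x = b ∧ y = a) ∨ (x = a ∧ y = b))

/-- Expanding at a vertex `u` of degree `d` (`2 ≤ d ≤ n-2`) all of whose neighbors
are leaves except `z0`: delete a leaf `b` outside `N[u]` and attach a new vertex
(reusing the label `b`) to `u`. -/
def isExpand {V : Type*} [Fintype V] (T T' : SimpleGraph V) : Prop :=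
  ∃ u b z0 : V, T.Adj u z0 ∧ ¬ IsLeaf T z0 ∧
    (∀ z, T.Adj u z → z ≠ z0 → IsLeaf T z) ∧
    2 ≤ (T.neighborSet u).ncard ∧ (T.neighborSet u).ncard ≤ Fintype.card V - 2 ∧
    IsLeaf T b ∧ b ≠ u ∧ ¬ T.Adj u b ∧
    ∀ x y, T'.Adj x y ↔
      ((T.Adj x y ∧ x ≠ b ∧ y ≠ b) ∨ (x = b ∧ y = u) ∨ (x = u ∧ y = b))

/-- Disjoint union of `K_m` and `K_l`. -/
def kUnion (m l : ℕ) : SimpleGraph (Fin m ⊕ Fin l) where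
  Adj x y := x ≠ y ∧ ((x.isLeft ∧ y.isLeft) ∨ (x.isRight ∧ y.isRight))
  symm := ⟨fun x y h => ⟨h.1.symm, h.2.imp (fun p => ⟨p.2, p.1⟩) (fun p => ⟨p.2, p.1⟩)⟩⟩
  loopless := ⟨fun x h => h.1 rfl⟩

/-- Disjoint union of `k` graphs, each on `Fin n`. -/
def disjUnion {k n : ℕ} (Fs : Fin k → SimpleGraph (Fin n)) :
    SimpleGraph (Fin k × Fin n) where
  Adj x y := x.1 = y.1 ∧ (Fs x.1).Adj x.2 y.2
  symm := ⟨by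
    rintro ⟨i, a⟩ ⟨j, b⟩ ⟨h1, h2⟩
    dsimp at h1 h2 ⊢
    subst h1
    exact ⟨rfl, h2.symm⟩⟩
  loopless := ⟨by
    rintro ⟨i, a⟩ ⟨h1, h2⟩
    exact (Fs i).irrefl h2⟩

/-- Disjoint union of graphs `Fs i` on `Fin (n i)`. -/
def sigmaUnion {r : ℕ} {n : Fin r → ℕ} (Fs : ∀ i, SimpleGraph (Fin (n i))) :
    SimpleGraph (Σ i, Fin (n i)) where
  Adj x y := ∃ (i : Fin r) (a b : Fin (n i)), x = ⟨i, a⟩ ∧ y = ⟨i, b⟩ ∧ (Fs i).Adj a b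
  symm := ⟨by
    rintro x y ⟨i, a, b, hx, hy, h⟩
    exact ⟨i, b, a, hy, hx, h.symm⟩⟩
  loopless := ⟨by
    rintro x ⟨i, a, b, hx, hy, h⟩
    rw [hx] at hy
    obtain ⟨-, hab⟩ := (Sigma.mk.inj_iff).mp hy
    exact (Fs i).irrefl (by cases eq_of_heq hab; exact h)⟩

/-!
Colour the edges of `K_N`, `N = (v(G)-1)(χ(H)-1) + s(H) - 1`, by splitting the vertices into
`χ(H) - 1` parts of size `v(G) - 1` and one part of size `s(H) - 1`, and colouring an edge red
exactly when it lies inside a part. A red copy of the connected graph `G` would lie inside one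
part, which is too small. A blue copy of `H` would colour `H` properly with `χ(H)` colours (the
parts), one of whose classes has fewer than `s(H)` vertices.
-/

theorem graphEmbeds_iff_isContained {V W : Type*} {G : SimpleGraph V} {H : SimpleGraph W} :
    graphEmbeds G H ↔ G ⊑ H :=
  ⟨fun ⟨f, hf, hadj⟩ => ⟨⟨⟨f, hadj _ _⟩, hf⟩⟩,
    fun ⟨f⟩ => ⟨f, f.injective, fun _ _ h => f.toHom.map_adj h⟩⟩

theorem SimpleGraph.Reachable.eq_of_forall_adj {V β : Type*} {G : SimpleGraph V} {f : V → β}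
    (hf : ∀ u v, G.Adj u v → f u = f v) {u v : V} (huv : G.Reachable u v) : f u = f v := by
  obtain ⟨p⟩ := huv
  induction p with
  | nil => rfl
  | cons hadj _ ih => exact (hf _ _ hadj).trans ih

section Ramsey

universe u

theorem exists_isNClique_or_isNClique_compl (s t : ℕ) : ∃ N, ∀ {α : Type u}
    (R : SimpleGraph α) (U : Finset α), N ≤ #U →
      (∃ A ⊆ U, R.IsNClique s A) ∨ ∃ B ⊆ U, Rᶜ.IsNClique t B := by
  classical
  induction s generalizing t with
  | zero => exact ⟨0, fun _ _ _ => .inl ⟨∅, empty_subset _, by simp⟩⟩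
  | succ s ihs =>
    induction t with
    | zero => exact ⟨0, fun _ _ _ => .inr ⟨∅, empty_subset _, by simp⟩⟩
    | succ t iht =>
      obtain ⟨N₁, hN₁⟩ := ihs (t + 1)
      obtain ⟨N₂, hN₂⟩ := iht
      refine ⟨N₁ + N₂ + 1, fun R U hU => ?_⟩
      obtain ⟨v, hv⟩ : U.Nonempty := card_pos.mp (by omega)
      set A := (U.erase v).filter (R.Adj v)
      set B := (U.erase v).filter (fun x => ¬R.Adj v x)
      have hAB : #A + #B + 1 = #U := by
        rw [card_filter_add_card_filter_not, card_erase_add_one hv]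
      have hAU : A ⊆ U := (filter_subset _ _).trans (erase_subset _ _)
      have hBU : B ⊆ U := (filter_subset _ _).trans (erase_subset _ _)
      by_cases hA : N₁ ≤ #A
      · rcases hN₁ R A hA with ⟨A', hA'A, hA'⟩ | ⟨B', hB'A, hB'⟩
        · exact .inl ⟨insert v A', insert_subset hv (hA'A.trans hAU),
            hA'.insert fun b hb => (mem_filter.mp (hA'A hb)).2⟩
        · exact .inr ⟨B', hB'A.trans hAU, hB'⟩
      · rcases hN₂ R B (by omega) with ⟨A', hA'B, hA'⟩ | ⟨B', hB'B, hB'⟩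
        · exact .inl ⟨A', hA'B.trans hBU, hA'⟩
        · refine .inr ⟨insert v B', insert_subset hv (hB'B.trans hBU),
            hB'.insert fun b hb => ?_⟩
          obtain ⟨hbU, hvb⟩ := mem_filter.mp (hB'B hb)
          exact (compl_adj R v b).mpr ⟨(ne_of_mem_erase hbU).symm, hvb⟩

end Ramsey

theorem SimpleGraph.IsNClique.isContained {V α : Type*} [Fintype V] {R : SimpleGraph α}
    {A : Finset α} (hA : R.IsNClique (Fintype.card V) A) (G : SimpleGraph V) : G ⊑ R :=
  (IsContained.of_le le_top).trans (not_free.mp (cliqueFree_iff_top_free.not.mp fun hR => hR A hA))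

section RamseyNumber

variable {V W α : Type*} {G : SimpleGraph V} {H : SimpleGraph W} {N N' : ℕ}

theorem exists_isRamsey [Fintype V] [Fintype W] (G : SimpleGraph V) (H : SimpleGraph W) :
    ∃ N, isRamsey G H N := by
  obtain ⟨N, hN⟩ := exists_isNClique_or_isNClique_compl (Fintype.card V) (Fintype.card W)
  refine ⟨N, fun R => ?_⟩
  simp only [graphEmbeds_iff_isContained]
  rcases hN R univ (by simp) with ⟨A, -, hA⟩ | ⟨B, -, hB⟩
  exacts [.inl (hA.isContained G), .inr (hB.isContained H)]

theorem isRamsey.isContained_or (hN : isRamsey G H N) (R : SimpleGraph α) (f : Fin N ↪ α) :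
    G ⊑ R ∨ H ⊑ Rᶜ := by
  rcases hN (R.comap f) with hG | hH
  · exact .inl ((graphEmbeds_iff_isContained.mp hG).trans (Embedding.comap f R).isContained)
  · exact .inr ((graphEmbeds_iff_isContained.mp hH).trans
      (Embedding.complEquiv (Embedding.comap f R)).isContained)

theorem isRamsey.mono (hN : isRamsey G H N) (h : N ≤ N') : isRamsey G H N' := fun R => by
  simpa only [graphEmbeds_iff_isContained] using hN.isContained_or R (Fin.castLEEmb h)

/- `ramsey G H` is an `sInf`, which would be `0` if no `N` worked: this is why the finite Ramsey
theorem is needed. -/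
theorem lt_ramsey_of_not_isRamsey [Fintype V] [Fintype W] (h : ¬isRamsey G H N) :
    N < ramsey G H := by
  by_contra! hle
  exact h (isRamsey.mono (Nat.sInf_mem (exists_isRamsey G H)) hle)

end RamseyNumber

section Surplus

variable {W : Type*} [Fintype W] {H : SimpleGraph W}

theorem colorable_chromNum : H.Colorable (chromNum H) :=
  Nat.sInf_mem (s := {n | H.Colorable n}) ⟨_, H.colorable_of_fintype⟩

theorem chromaticNumber_eq_chromNum : H.chromaticNumber = chromNum H :=
  H.colorable_of_fintype.chromaticNumber_eq_sInf

theorem SimpleGraph.Coloring.surjective_of_chromNum (C : H.Coloring (Fin (chromNum H))) :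
    Function.Surjective C :=
  le_chromaticNumber_iff_forall_surjective.mp chromaticNumber_eq_chromNum.ge C

theorem surplus_le_card_colorClass (C : H.Coloring (Fin (chromNum H))) (i : Fin (chromNum H)) :
    surplus H ≤ #{w | C w = i} :=
  Nat.sInf_le ⟨C, i, rfl⟩

theorem surplus_eq_zero_of_chromNum_eq_zero (h : chromNum H = 0) : surplus H = 0 := by
  refine Nat.sInf_eq_zero.mpr (.inr (Set.eq_empty_iff_forall_notMem.mpr ?_))
  rintro _ ⟨-, i, -⟩
  exact absurd i.isLt (by omega)

theorem surplus_pos (hχ : 0 < chromNum H) : 0 < surplus H := by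
  obtain ⟨C⟩ := colorable_chromNum (H := H)
  refine Nat.pos_of_ne_zero fun h => ?_
  rcases Nat.sInf_eq_zero.mp h with ⟨C', i, hi⟩ | h
  · obtain ⟨w, hw⟩ := C'.surjective_of_chromNum i
    rw [card_eq_zero, filter_eq_empty_iff] at hi
    exact hi (mem_univ w) hw
  · exact Set.eq_empty_iff_forall_notMem.mp h _ ⟨C, ⟨0, hχ⟩, rfl⟩

theorem surplus_le_card_of_isContained_completeMultipartiteGraph {P : Fin (chromNum H) → Type*}
    [∀ i, Finite (P i)] (h : H ⊑ completeMultipartiteGraph P) (i : Fin (chromNum H)) :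
    surplus H ≤ Nat.card (P i) := by
  obtain ⟨g⟩ := h
  let C : H.Coloring (Fin (chromNum H)) := Coloring.mk (fun w => (g w).1) (g.toHom.map_adj ·)
  calc surplus H ≤ #{w | C w = i} := surplus_le_card_colorClass C i
    _ = Nat.card {w // (g w).1 = i} := by rw [Nat.card_eq_fintype_card, Fintype.card_subtype]; rfl
    _ ≤ Nat.card (P i) :=
        Nat.card_le_card_of_injective (fun w => Equiv.sigmaSubtype i ⟨g w, w.2⟩)
          fun u v huv => Subtype.ext (g.injective (congrArg Subtype.val
            ((Equiv.sigmaSubtype i).injective huv)))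

end Surplus

theorem SimpleGraph.Connected.card_le_of_isContained_compl_completeMultipartiteGraph
    {V ι : Type*} {P : ι → Type*} [∀ i, Finite (P i)] {G : SimpleGraph V} (hG : G.Connected)
    (h : G ⊑ (completeMultipartiteGraph P)ᶜ) :
    ∃ i, Nat.card V ≤ Nat.card (P i) := by
  obtain ⟨f⟩ := h
  obtain ⟨v₀⟩ := hG.nonempty
  have hpart (v : V) : (f v).1 = (f v₀).1 :=
    (hG.preconnected v v₀).eq_of_forall_adj fun _ _ hadj => not_not.mp (f.toHom.map_adj hadj).2
  let e := Equiv.sigmaSubtype (β := P) (f v₀).1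
  refine ⟨(f v₀).1, Nat.card_le_card_of_injective (fun v => e ⟨f v, hpart v⟩) ?_⟩
  exact fun u v huv => f.injective (congrArg Subtype.val (e.injective huv))

theorem not_isRamsey_sum {V W : Type*} [Fintype V] [Fintype W] {G : SimpleGraph V}
    {H : SimpleGraph W} (hG : G.Connected) (a : Fin (chromNum H) → ℕ)
    (ha : ∀ i, a i < Fintype.card V) (i : Fin (chromNum H)) (hi : a i < surplus H) :
    ¬isRamsey G H (∑ i, a i) := by
  intro hN
  rcases hN.isContained_or (completeMultipartiteGraph fun i => Fin (a i))ᶜ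
    finSigmaFinEquiv.symm.toEmbedding with hred | hblue
  · obtain ⟨j, hj⟩ := hG.card_le_of_isContained_compl_completeMultipartiteGraph hred
    rw [Nat.card_eq_fintype_card, Nat.card_fin] at hj
    exact (ha j).not_ge hj
  · rw [compl_compl] at hblue
    have := surplus_le_card_of_isContained_completeMultipartiteGraph hblue i
    rw [Nat.card_fin] at this
    omega

/-- Burr's lower bound: for a connected graph `G` and a graph `H` with
`v(G) ≥ s(H)`, `R(G,H) ≥ (v(G)-1)(χ(H)-1) + s(H)`. -/
theorem stmt_0 {V W : Type*} [Fintype V] [Fintype W]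
    (G : SimpleGraph V) (H : SimpleGraph W)
    (hG : G.Connected) (hs : surplus H ≤ Fintype.card V) :
    (Fintype.card V - 1) * (chromNum H - 1) + surplus H ≤ ramsey G H := by
  obtain hχ | hχ := Nat.eq_zero_or_pos (chromNum H)
  · simp [hχ, surplus_eq_zero_of_chromNum_eq_zero hχ]
  have hn : 0 < Fintype.card V := Fintype.card_pos_iff.mpr hG.nonempty
  have hs₀ : 0 < surplus H := surplus_pos hχ
  let i₀ : Fin (chromNum H) := ⟨0, hχ⟩
  let a := Function.update (fun _ => Fintype.card V - 1) i₀ (surplus H - 1)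
  have hsum : ∑ i, a i = (Fintype.card V - 1) * (chromNum H - 1) + (surplus H - 1) := by
    rw [sum_update_of_mem (mem_univ i₀)]
    simp only [sum_const, card_sdiff, card_univ, Fintype.card_fin, inter_univ, card_singleton,
      smul_eq_mul]
    ring
  have ha (i : Fin (chromNum H)) : a i < Fintype.card V := by
    rcases eq_or_ne i i₀ with rfl | hi
    · simp only [a, Function.update_self]; omega
    · simp only [a, Function.update_of_ne hi]; omega
  have hi₀ : a i₀ < surplus H := by simp only [a, Function.update_self]; omega
  have := lt_ramsey_of_not_isRamsey (not_isRamsey_sum hG a ha i₀ hi₀)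
  omega
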